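/- For the vertex normals N_k = (ν_k + ν_{k-1})/(1 + cos θ_k) and unit tangents t_k = (p_{k+1}−p_k)/|p_{k+1}−p_k|, one has the discrete Frenet-type formula (N_{k+1} − N_k)/|p_{k+1} − p_k| = −κ(e_k) t_k, where κ(e_k) = (tan(θ_k/2) + tan(θ_{k+1}/2))/|p_{k+1} − p_k|. -/

import Mathlib

open Real Finset
open scoped RealInnerProductSpace

abbrev E2 := EuclideanSpace ℝ (Fin 2)

/-- Rotation by π/2 in the plane. -/
noncomputable def Rot (v : E2) : E2 :=
  (WithLp.equiv 2 (Fin 2 → ℝ)).symm ![-v 1, v 0]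

/-- Rotation by angle θ in the plane. -/
noncomputable def RotBy (θ : ℝ) (v : E2) : E2 :=
  (WithLp.equiv 2 (Fin 2 → ℝ)).symm
    ![Real.cos θ * v 0 - Real.sin θ * v 1, Real.sin θ * v 0 + Real.cos θ * v 1]


/-!
Write `T = t_k` and `ν_k = R T`. Both vertex normals adjacent to the edge `e_k` are `ν_k` shifted
along the edge: the half-angle identity `sin θ / (1 + cos θ) = tan (θ / 2)` turns
`N_k = (1 + cos θ_k)⁻¹ (ν_k + ν_{k-1})` into `ν_k + tan (θ_k / 2) T` and
`N_{k+1}` into `ν_k - tan (θ_{k+1} / 2) T`, so their difference is a multiple of `T`.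
-/

lemma RotBy_eq_cos_smul_add_sin_smul_Rot (θ : ℝ) (v : E2) :
    RotBy θ v = Real.cos θ • v + Real.sin θ • Rot v := by
  ext i
  fin_cases i <;> simp [RotBy, Rot] <;> ring

lemma Rot_Rot (v : E2) : Rot (Rot v) = -v := by
  ext i
  fin_cases i <;> simp [Rot]

lemma RotBy_neg_RotBy (θ : ℝ) (v : E2) : RotBy (-θ) (RotBy θ v) = v := by
  ext i
  fin_cases i
  · simp [RotBy]; linear_combination (v 0) * Real.sin_sq_add_cos_sq θ
  · simp [RotBy]; linear_combination (v 1) * Real.sin_sq_add_cos_sq θ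

lemma one_add_cos_eq_two_mul_cos_half_sq (x : ℝ) : 1 + Real.cos x = 2 * Real.cos (x / 2) ^ 2 := by
  rw [Real.cos_sq, mul_div_cancel₀ x two_ne_zero]
  ring

/-- Holds for every `x`: where `cos (x / 2) = 0` both sides are `0` by division by zero. -/
lemma tan_half_eq_sin_div_one_add_cos (x : ℝ) :
    Real.tan (x / 2) = Real.sin x / (1 + Real.cos x) := by
  rw [one_add_cos_eq_two_mul_cos_half_sq, Real.tan_eq_sin_div_cos,
    show Real.sin x = 2 * Real.sin (x / 2) * Real.cos (x / 2) by
      rw [← Real.sin_two_mul, mul_div_cancel₀ x two_ne_zero]]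
  rcases eq_or_ne (Real.cos (x / 2)) 0 with h | h
  · simp [h]
  · field_simp

lemma one_add_cos_pos_of_mem_Ioo {x : ℝ} (hx : x ∈ Set.Ioo (-π) π) : 0 < 1 + Real.cos x := by
  have : 0 < Real.cos (x / 2) :=
    Real.cos_pos_of_mem_Ioo ⟨by linarith [hx.1], by linarith [hx.2]⟩
  rw [one_add_cos_eq_two_mul_cos_half_sq]
  positivity

lemma inv_one_add_cos_smul_RotBy_add_eq_add {θ : ℝ} (hθ : 1 + Real.cos θ ≠ 0) (u : E2) :
    (1 + Real.cos θ)⁻¹ • (RotBy θ u + u) = u + Real.tan (θ / 2) • Rot u := by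
  rw [RotBy_eq_cos_smul_add_sin_smul_Rot, tan_half_eq_sin_div_one_add_cos]
  match_scalars <;> field_simp
  ring

lemma inv_one_add_cos_smul_RotBy_add_eq_sub {θ : ℝ} (hθ : 1 + Real.cos θ ≠ 0) (u : E2) :
    (1 + Real.cos θ)⁻¹ • (RotBy θ u + u) =
      RotBy θ u - Real.tan (θ / 2) • Rot (RotBy θ u) := by
  have := inv_one_add_cos_smul_RotBy_add_eq_add (θ := -θ) (by rwa [Real.cos_neg]) (RotBy θ u)
  rwa [RotBy_neg_RotBy, Real.cos_neg, neg_div, Real.tan_neg, neg_smul, ← sub_eq_add_neg,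
    add_comm u] at this

theorem discrete_frenet_formula_general (n : ℕ)
    (p : ZMod n → E2)
    (ν : ZMod n → E2)
    (hν : ∀ k, ν k = Rot (‖p (k + 1) - p k‖⁻¹ • (p (k + 1) - p k)))
    (θ : ZMod n → ℝ) (hθrange : ∀ k, θ k ∈ Set.Ioo (-π) π)
    (hθ : ∀ k, RotBy (θ k) (ν (k - 1)) = ν k)
    (N : ZMod n → E2)
    (hN : ∀ k, N k = (1 + Real.cos (θ k))⁻¹ • (ν k + ν (k - 1))) :
    ∀ k : ZMod n,
      ‖p (k + 1) - p k‖⁻¹ • (N (k + 1) - N k) =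
        -(((Real.tan (θ k / 2) + Real.tan (θ (k + 1) / 2)) / ‖p (k + 1) - p k‖) •
          (‖p (k + 1) - p k‖⁻¹ • (p (k + 1) - p k))) := by
  intro k
  set T := ‖p (k + 1) - p k‖⁻¹ • (p (k + 1) - p k)
  have hRot : Rot (ν k) = -T := by rw [hν k, Rot_Rot]
  have hcos (j : ZMod n) : 1 + Real.cos (θ j) ≠ 0 :=
    (one_add_cos_pos_of_mem_Ioo (hθrange j)).ne'
  have hNk : N k = ν k + Real.tan (θ k / 2) • T := by
    rw [hN k, ← hθ k, inv_one_add_cos_smul_RotBy_add_eq_sub (hcos k), hθ k, hRot, smul_neg,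
      sub_neg_eq_add]
  have hNk1 : N (k + 1) = ν k - Real.tan (θ (k + 1) / 2) • T := by
    rw [hN (k + 1), add_sub_cancel_right, ← hθ (k + 1), add_sub_cancel_right,
      inv_one_add_cos_smul_RotBy_add_eq_add (hcos (k + 1)), hRot, smul_neg, ← sub_eq_add_neg]
  rw [hNk, hNk1]
  module

theorem discrete_frenet_formula (n : ℕ) [NeZero n]
    (p : ZMod n → E2) (hreg : ∀ k, p (k + 1) ≠ p k)
    (ν : ZMod n → E2)
    (hν : ∀ k, ν k = Rot (‖p (k + 1) - p k‖⁻¹ • (p (k + 1) - p k)))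
    (θ : ZMod n → ℝ) (hθrange : ∀ k, θ k ∈ Set.Ioo (-π) π)
    (hθ : ∀ k, RotBy (θ k) (ν (k - 1)) = ν k)
    (N : ZMod n → E2)
    (hN : ∀ k, N k = (1 + Real.cos (θ k))⁻¹ • (ν k + ν (k - 1))) :
    ∀ k : ZMod n,
      ‖p (k + 1) - p k‖⁻¹ • (N (k + 1) - N k) =
        -(((Real.tan (θ k / 2) + Real.tan (θ (k + 1) / 2)) / ‖p (k + 1) - p k‖) •
          (‖p (k + 1) - p k‖⁻¹ • (p (k + 1) - p k))) :=
  discrete_frenet_formula_general n p ν hν θ hθrange hθ N hN
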